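/- arXiv:2601.16535 — 8 statements merged into one kernel-verified Lean document; each statement's English description precedes it below -/
import Mathlib

section
/- Let λ ≥ 1, 0 < α < π/2, A₁(α) = (1 - λ cos α)/sin α and A₂(α) = (1 - λ sin α)/cos α. Then λ - A₁(α) - A₂(α) > 0. -/
open Real

theorem arc_length_bound (lam α : ℝ) (hlam : 1 ≤ lam) (hα0 : 0 < α) (hα1 : α < π / 2) :
    0 < lam - (1 - lam * Real.cos α) / Real.sin α - (1 - lam * Real.sin α) / Real.cos α := by
  have hs : 0 < Real.sin α := Real.sin_pos_of_pos_of_lt_pi hα0 (by linarith [Real.pi_pos])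
  have hc : 0 < Real.cos α := Real.cos_pos_of_mem_Ioo ⟨by linarith [Real.pi_pos], hα1⟩
  have h : (1 - lam * Real.cos α) / Real.sin α + (1 - lam * Real.sin α) / Real.cos α < lam := by
    rw [div_add_div _ _ (ne_of_gt hs) (ne_of_gt hc), div_lt_iff₀ (by positivity)]
    have key : Real.sin α + Real.cos α < 1 + Real.sin α * Real.cos α := by
      nlinarith [Real.sin_sq_add_cos_sq α, mul_pos (mul_pos hs hc) (mul_pos hs hc),
        mul_pos hs hc, sq_nonneg (Real.sin α + Real.cos α)]
    nlinarith [Real.sin_sq_add_cos_sq α, mul_nonneg (sub_nonneg.mpr hlam) (by positivity : (0:ℝ) ≤ 1 + Real.sin α * Real.cos α)]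
  linarith
end

section
/- The function x ↦ x + l(x), where l(x) = x - x·√(x² - 1), is strictly decreasing on [1, √2], and satisfies √2 ≤ x + l(x) ≤ 2 for all x in [1, √2], with x + l(x) = 2 if and only if x = 1. -/
open Real Set

lemma key_anti : StrictAntiOn (fun x : ℝ => x + (x - x * Real.sqrt (x ^ 2 - 1))) (Set.Icc 1 (Real.sqrt 2)) := by
  intro a ha b hb hab
  obtain ⟨ha1, ha2⟩ := ha
  obtain ⟨hb1, hb2⟩ := hb
  have hb2' : b ^ 2 ≤ 2 := by
    have := Real.sq_sqrt (by norm_num : (2:ℝ) ≥ 0)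
    nlinarith [Real.sqrt_nonneg 2]
  set sa := Real.sqrt (a ^ 2 - 1) with hsa
  set sb := Real.sqrt (b ^ 2 - 1) with hsb
  have hsa0 : 0 ≤ sa := Real.sqrt_nonneg _
  have hsb0 : 0 ≤ sb := Real.sqrt_nonneg _
  have hsa2 : sa ^ 2 = a ^ 2 - 1 := Real.sq_sqrt (by nlinarith)
  have hsb2 : sb ^ 2 = b ^ 2 - 1 := Real.sq_sqrt (by nlinarith)
  have hbgt : 1 < b := lt_of_le_of_lt ha1 hab
  have hsbpos : 0 < sb := Real.sqrt_pos.mpr (by nlinarith)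
  have hXY : 0 < b * sb + a * sa := by positivity
  simp only
  have e1 : (b*sb - a*sa)*(b*sb+a*sa) = b^2*sb^2 - a^2*sa^2 := by ring
  rw [hsa2, hsb2] at e1
  have e1' : b^2*(b^2-1) - a^2*(a^2-1) = (b^2-a^2)*(a^2+b^2-1) := by ring
  have e2 : b*sb + a*sa <= a^2 + b^2 - 1 := by nlinarith [sq_nonneg (b-sb), sq_nonneg (a-sa)]
  have e3 : (0:Real) < b^2 - a^2 := by nlinarith
  have e4 : (b^2-a^2)*(b*sb+a*sa) <= (b^2-a^2)*(a^2+b^2-1) := mul_le_mul_of_nonneg_left e2 e3.le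
  have e5 : b^2 - a^2 <= b*sb - a*sa := le_of_mul_le_mul_right (by linarith) hXY
  nlinarith [mul_pos (sub_pos.2 hab) (show (0:Real) < a + b - 2 by linarith)]

theorem x_add_l_strictAnti :
    StrictAntiOn (fun x : ℝ => x + (x - x * Real.sqrt (x ^ 2 - 1))) (Set.Icc 1 (Real.sqrt 2)) ∧
    ∀ x ∈ Set.Icc (1:ℝ) (Real.sqrt 2),
      Real.sqrt 2 ≤ x + (x - x * Real.sqrt (x ^ 2 - 1)) ∧
      x + (x - x * Real.sqrt (x ^ 2 - 1)) ≤ 2 ∧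
      (x + (x - x * Real.sqrt (x ^ 2 - 1)) = 2 ↔ x = 1) := by
  have hs2 : (1:ℝ) ≤ Real.sqrt 2 := by
    rw [show (1:ℝ) = Real.sqrt 1 by simp]
    exact Real.sqrt_le_sqrt (by norm_num)
  have hf1 : (1:ℝ) + (1 - 1 * Real.sqrt (1 ^ 2 - 1)) = 2 := by norm_num
  have hfs2 : Real.sqrt 2 + (Real.sqrt 2 - Real.sqrt 2 * Real.sqrt ((Real.sqrt 2) ^ 2 - 1)) = Real.sqrt 2 := by
    rw [Real.sq_sqrt (by norm_num : (0:ℝ) ≤ 2)]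
    norm_num
  refine ⟨key_anti, fun x hx => ?_⟩
  obtain ⟨hx1, hx2⟩ := hx
  have h1mem : (1:ℝ) ∈ Set.Icc 1 (Real.sqrt 2) := ⟨le_refl _, hs2⟩
  have hsmem : Real.sqrt 2 ∈ Set.Icc (1:ℝ) (Real.sqrt 2) := ⟨hs2, le_refl _⟩
  have hxmem : x ∈ Set.Icc (1:ℝ) (Real.sqrt 2) := ⟨hx1, hx2⟩
  refine ⟨?_, ?_, ?_⟩
  · rcases eq_or_lt_of_le hx2 with h | h
    · rw [h, hfs2]
    · have := key_anti hxmem hsmem h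
      simp only at this
      rw [hfs2] at this
      linarith
  · rcases eq_or_lt_of_le hx1 with h | h
    · rw [← h]; norm_num
    · have := key_anti h1mem hxmem h
      simp only at this
      rw [hf1] at this
      linarith
  · constructor
    · intro he
      by_contra hne
      have h : 1 < x := lt_of_le_of_ne hx1 (Ne.symm hne)
      have := key_anti h1mem hxmem h
      simp only at this
      rw [hf1] at this
      linarith
    · intro h; rw [h]; norm_num
end

section
/- The equation x + 1 = l(x) + √2, where l(x) = x - x·√(x² - 1), has a unique solution x̄ in the interval [1, √2], and x̄ = (1/2)·√2·√(√(13 - 8√2) + 1). -/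
open Real Set

lemma xbar_facts :
    let x := 1 / 2 * Real.sqrt 2 * Real.sqrt (Real.sqrt (13 - 8 * Real.sqrt 2) + 1)
    x ∈ Set.Icc (1:ℝ) (Real.sqrt 2) ∧ x * Real.sqrt (x ^ 2 - 1) = Real.sqrt 2 - 1 := by
  intro x
  have s2 : Real.sqrt 2 ^ 2 = 2 := Real.sq_sqrt (by norm_num)
  have s2nn : (0:ℝ) ≤ Real.sqrt 2 := Real.sqrt_nonneg 2
  have s2lb : (1:ℝ) ≤ Real.sqrt 2 := by nlinarith
  have s2ub : Real.sqrt 2 ≤ 1.5 := by nlinarith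
  set a := Real.sqrt (13 - 8 * Real.sqrt 2) with ha
  have ha2 : a ^ 2 = 13 - 8 * Real.sqrt 2 := Real.sq_sqrt (by nlinarith)
  have hann : (0:ℝ) ≤ a := Real.sqrt_nonneg _
  have ha1 : 1 ≤ a := by nlinarith
  have ha3 : a ≤ 2 := by nlinarith
  have hx2 : x ^ 2 = (a + 1) / 2 := by
    have h1 : Real.sqrt (a + 1) ^ 2 = a + 1 := Real.sq_sqrt (by linarith)
    show (1 / 2 * Real.sqrt 2 * Real.sqrt (a + 1)) ^ 2 = (a + 1) / 2
    rw [mul_pow, mul_pow, s2, h1]; ring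
  have hxnn : (0:ℝ) ≤ x := by positivity
  have hx1 : 1 ≤ x := by nlinarith
  have hxub : x ≤ Real.sqrt 2 := by nlinarith
  refine ⟨⟨hx1, hxub⟩, ?_⟩
  have hsub : x ^ 2 - 1 = (a - 1) / 2 := by rw [hx2]; ring
  have hkey : x * Real.sqrt (x ^ 2 - 1) = Real.sqrt (x ^ 2 * (x ^ 2 - 1)) := by
    rw [Real.sqrt_mul (sq_nonneg x), Real.sqrt_sq hxnn]
  have hval : x ^ 2 * (x ^ 2 - 1) = (Real.sqrt 2 - 1) ^ 2 := by
    rw [hx2]; nlinarith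
  rw [hkey, hval, Real.sqrt_sq (by linarith)]

theorem unique_solution_xbar :
    (∃! x : ℝ, x ∈ Set.Icc 1 (Real.sqrt 2) ∧
        x + 1 = (x - x * Real.sqrt (x ^ 2 - 1)) + Real.sqrt 2) ∧
    (1 / 2 * Real.sqrt 2 * Real.sqrt (Real.sqrt (13 - 8 * Real.sqrt 2) + 1)) ∈
        Set.Icc (1:ℝ) (Real.sqrt 2) ∧
    (1 / 2 * Real.sqrt 2 * Real.sqrt (Real.sqrt (13 - 8 * Real.sqrt 2) + 1)) + 1 =
      ((1 / 2 * Real.sqrt 2 * Real.sqrt (Real.sqrt (13 - 8 * Real.sqrt 2) + 1)) -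
        (1 / 2 * Real.sqrt 2 * Real.sqrt (Real.sqrt (13 - 8 * Real.sqrt 2) + 1)) *
          Real.sqrt ((1 / 2 * Real.sqrt 2 * Real.sqrt (Real.sqrt (13 - 8 * Real.sqrt 2) + 1)) ^ 2 - 1)) +
        Real.sqrt 2 := by
  obtain ⟨hmem, heq⟩ := xbar_facts
  set x := 1 / 2 * Real.sqrt 2 * Real.sqrt (Real.sqrt (13 - 8 * Real.sqrt 2) + 1) with hx
  have s2 : Real.sqrt 2 ^ 2 = 2 := Real.sq_sqrt (by norm_num)
  have s2lb : (1:ℝ) ≤ Real.sqrt 2 := by nlinarith [Real.sqrt_nonneg 2]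
  have hxeq : x + 1 = (x - x * Real.sqrt (x ^ 2 - 1)) + Real.sqrt 2 := by
    rw [heq]; ring
  refine ⟨⟨x, ⟨hmem, hxeq⟩, ?_⟩, hmem, hxeq⟩
  rintro y ⟨⟨hy1, hy2⟩, hyeq⟩
  have hyv : y * Real.sqrt (y ^ 2 - 1) = Real.sqrt 2 - 1 := by linarith
  have hy2nn : (0:ℝ) ≤ y ^ 2 - 1 := by nlinarith
  have hys : Real.sqrt (y ^ 2 - 1) ^ 2 = y ^ 2 - 1 := Real.sq_sqrt hy2nn
  have hy4 : y ^ 2 * (y ^ 2 - 1) = (Real.sqrt 2 - 1) ^ 2 := by nlinarith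
  obtain ⟨hx1, hx2⟩ := hmem
  have hxs : Real.sqrt (x ^ 2 - 1) ^ 2 = x ^ 2 - 1 := Real.sq_sqrt (by nlinarith)
  have hx4 : x ^ 2 * (x ^ 2 - 1) = (Real.sqrt 2 - 1) ^ 2 := by nlinarith
  have hsq : y ^ 2 = x ^ 2 := by nlinarith
  nlinarith
end

section
/- Let φ = (1+√5)/2 and λ = √φ. For α in the interval [arccos(1/√φ), arcsin(1/√φ)], define A₁(α) = (1 - λ cos α)/sin α and A₂(α) = (1 - λ sin α)/cos α. Then A₁ is strictly increasing and A₂ is strictly decreasing on this interval, and the maximum value of each (attained at the respective endpoint) equals √φ - 1. -/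
open Real Set

/-!
On `(0, π)` the derivative of `α ↦ (1 - λ cos α) / sin α` is `(λ - cos α) / sin² α`, which is
positive as soon as `λ ≥ 1`; the second function is the first one reflected by `α ↦ π/2 - α`,
which also exchanges the two endpoints `arccos (1/λ) = π/2 - arcsin (1/λ)`. At the endpoint the
value is `λ (1 - √(λ² - 1))`, and `λ² - 1 = φ - 1 = φ⁻¹` turns this into `λ - 1`.
-/

theorem strictMonoOn_one_sub_mul_cos_div_sin {l : ℝ} (hl : 1 ≤ l) :
    StrictMonoOn (fun α => (1 - l * cos α) / sin α) (Ioo 0 π) := by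
  have hsin : ∀ x ∈ Ioo 0 π, sin x ≠ 0 := fun x hx => (sin_pos_of_mem_Ioo hx).ne'
  refine strictMonoOn_of_deriv_pos (convex_Ioo 0 π)
    (ContinuousOn.div (by fun_prop) (by fun_prop) hsin) fun x hx => ?_
  rw [interior_Ioo] at hx
  have hderiv : HasDerivAt (fun α => (1 - l * cos α) / sin α) ((l - cos x) / sin x ^ 2) x := by
    refine (((hasDerivAt_const x 1).sub ((hasDerivAt_cos x).const_mul l)).div
      (hasDerivAt_sin x) (hsin x hx)).congr_deriv ?_
    simp only [Pi.sub_apply]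
    congr 1
    linear_combination l * sin_sq_add_cos_sq x
  have hcos : cos x < 1 := by
    rw [← cos_zero]
    exact cos_lt_cos_of_nonneg_of_le_pi le_rfl hx.2.le hx.1
  rw [hderiv.deriv]
  exact div_pos (by linarith) (pow_pos (sin_pos_of_mem_Ioo hx) 2)

theorem one_sub_mul_sin_div_cos_eq (l α : ℝ) :
    (1 - l * sin α) / cos α = (1 - l * cos (π / 2 - α)) / sin (π / 2 - α) := by
  rw [cos_pi_div_two_sub, sin_pi_div_two_sub]

theorem strictAntiOn_one_sub_mul_sin_div_cos {l : ℝ} (hl : 1 ≤ l) :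
    StrictAntiOn (fun α => (1 - l * sin α) / cos α) (Ioo (-(π / 2)) (π / 2)) := by
  simp only [one_sub_mul_sin_div_cos_eq l]
  refine (strictMonoOn_one_sub_mul_cos_div_sin hl).comp_strictAntiOn
    (fun x _ y _ hxy => by linarith) fun x hx => ?_
  constructor <;> linarith [hx.1, hx.2]

theorem one_sub_mul_cos_arcsin_div_sin_arcsin {l : ℝ} (hl : 1 ≤ l) :
    (1 - l * cos (arcsin (1 / l))) / sin (arcsin (1 / l)) = l * (1 - √(l ^ 2 - 1)) := by
  have hl0 : 0 < l := by linarith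
  have hinv : 1 / l ≤ 1 := (div_le_one hl0).mpr hl
  rw [cos_arcsin, sin_arcsin (by linarith [one_div_pos.mpr hl0]) hinv,
    show 1 - (1 / l) ^ 2 = (l ^ 2 - 1) / l ^ 2 by field_simp,
    sqrt_div' _ (sq_nonneg l), sqrt_sq hl0.le]
  field_simp

theorem Icc_arccos_arcsin_subset_Ioo {x : ℝ} (hx : x < 1) :
    Icc (arccos x) (arcsin x) ⊆ Ioo 0 (π / 2) :=
  Icc_subset_Ioo (arccos_pos.mpr hx) (arcsin_lt_pi_div_two.mpr hx)

theorem A1_mono_A2_anti :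
    let φ : ℝ := (1 + Real.sqrt 5) / 2
    let lam : ℝ := Real.sqrt φ
    let I : Set ℝ := Set.Icc (Real.arccos (1 / Real.sqrt φ)) (Real.arcsin (1 / Real.sqrt φ))
    StrictMonoOn (fun α => (1 - lam * Real.cos α) / Real.sin α) I ∧
    StrictAntiOn (fun α => (1 - lam * Real.sin α) / Real.cos α) I ∧
    (1 - lam * Real.cos (Real.arcsin (1 / Real.sqrt φ))) /
        Real.sin (Real.arcsin (1 / Real.sqrt φ)) = Real.sqrt φ - 1 ∧
    (1 - lam * Real.sin (Real.arccos (1 / Real.sqrt φ))) /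
        Real.cos (Real.arccos (1 / Real.sqrt φ)) = Real.sqrt φ - 1 := by
  intro φ lam I
  have hlam : 1 < lam := (lt_sqrt zero_le_one).mpr (by rw [one_pow]; exact one_lt_goldenRatio)
  have hI : I ⊆ Ioo 0 (π / 2) :=
    Icc_arccos_arcsin_subset_Ioo ((div_lt_one (by linarith)).mpr hlam)
  have hlam_sq_sub_one : lam ^ 2 - 1 = lam⁻¹ ^ 2 := by
    rw [inv_pow, sq_sqrt goldenRatio_pos.le, inv_goldenRatio, ← one_sub_goldenConj]
    ring
  have hvalue : (1 - lam * cos (arcsin (1 / lam))) / sin (arcsin (1 / lam)) = lam - 1 := by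
    rw [one_sub_mul_cos_arcsin_div_sin_arcsin hlam.le, hlam_sq_sub_one,
      sqrt_sq (inv_pos.mpr (by linarith)).le, mul_sub, mul_inv_cancel₀ (by linarith), mul_one]
  refine ⟨(strictMonoOn_one_sub_mul_cos_div_sin hlam.le).mono
      (hI.trans (Ioo_subset_Ioo_right (by linarith [pi_pos]))),
    (strictAntiOn_one_sub_mul_sin_div_cos hlam.le).mono
      (hI.trans (Ioo_subset_Ioo_left (by linarith [pi_pos]))), hvalue, ?_⟩
  rw [one_sub_mul_sin_div_cos_eq, arccos_eq_pi_div_two_sub_arcsin, sub_sub_cancel]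
  exact hvalue
end

section
/- Let φ = (1+√5)/2, λ = √φ, α₀ = arccos(1/λ), A₁(α) = (1 - λ cos α)/sin α, A₂(α) = (1 - λ sin α)/cos α, and l(x) = x - x√(x² - 1). Define f(α) = l(λ - A₁(α)) + l(λ - A₂(α)). Then f(α₀) = λ. -/
open Real

theorem f_at_alpha0_eq_lam :
    let φ : ℝ := (1 + Real.sqrt 5) / 2
    let lam : ℝ := Real.sqrt φ
    let α₀ : ℝ := Real.arccos (1 / lam)
    let A₁ : ℝ → ℝ := fun α => (1 - lam * Real.cos α) / Real.sin α
    let A₂ : ℝ → ℝ := fun α => (1 - lam * Real.sin α) / Real.cos α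
    let l : ℝ → ℝ := fun x => x - x * Real.sqrt (x ^ 2 - 1)
    l (lam - A₁ α₀) + l (lam - A₂ α₀) = lam := by
  intro φ lam α₀ A₁ A₂ l
  have h5 : Real.sqrt 5 ^ 2 = 5 := Real.sq_sqrt (by norm_num)
  have h5' : (1:ℝ) < Real.sqrt 5 := by
    nlinarith [Real.sqrt_nonneg 5]
  have hφ1 : (1:ℝ) < φ := by simp only [φ]; linarith
  have hφ0 : (0:ℝ) < φ := by linarith
  have hφsq : φ ^ 2 = φ + 1 := by simp only [φ]; nlinarith
  have hlam2 : lam ^ 2 = φ := Real.sq_sqrt hφ0.le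
  have hlam1 : (1:ℝ) < lam := by nlinarith [Real.sqrt_nonneg φ]
  have hlam0 : (0:ℝ) < lam := by linarith
  have hcos : Real.cos α₀ = 1 / lam := by
    apply Real.cos_arccos
    · rw [le_div_iff₀ hlam0]; nlinarith
    · rw [div_le_one hlam0]; linarith
  have hsin : Real.sin α₀ = Real.sqrt (1 - 1/φ) := by
    rw [Real.sin_arccos]
    congr 1
    rw [div_pow, one_pow, hlam2]
  -- lam * sin α₀ = √(φ-1)
  have hls : lam * Real.sin α₀ = Real.sqrt (φ - 1) := by
    rw [hsin]
    have : lam * Real.sqrt (1 - 1/φ) = Real.sqrt (φ * (1 - 1/φ)) := by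
      rw [Real.sqrt_mul hφ0.le]
    rw [this]
    congr 1
    field_simp
  -- lam * √(φ-1) = 1
  have hkey : lam * Real.sqrt (φ - 1) = 1 := by
    have : lam * Real.sqrt (φ - 1) = Real.sqrt (φ * (φ - 1)) := by
      rw [Real.sqrt_mul hφ0.le]
    rw [this]
    have : φ * (φ - 1) = 1 := by nlinarith
    rw [this, Real.sqrt_one]
  have hA1 : A₁ α₀ = 0 := by
    simp only [A₁, hcos]
    rw [mul_one_div, div_self hlam0.ne']
    simp
  have hA2 : lam - A₂ α₀ = 1 := by
    have hA2v : A₂ α₀ = lam - 1 := by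
      simp only [A₂, hcos]
      rw [div_div_eq_mul_div, div_one, hls]
      nlinarith [hkey]
    rw [hA2v]; ring
  have hl1 : l 1 = 1 := by
    simp only [l]
    norm_num
  have hllam : l lam = lam - 1 := by
    simp only [l]
    rw [hlam2]
    nlinarith [hkey]
  rw [hA1, hA2, sub_zero, hllam, hl1]
  ring
end

section
/- Let X be an L-shape maximally embedded in a unit square S, with legs of lengths x and l(x) where x > 1 (and x ≤ √2). Then l(x) < 1, the endpoint of X on the longer leg is a vertex of S, the other endpoint and the corner of X lie on the two sides of S not containing that vertex, and l(x) = x - x·√(x² - 1). -/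
open Set Metric

noncomputable section

abbrev E2 := EuclideanSpace ℝ (Fin 2)

def unitSq : Set E2 := {p | p 0 ∈ Set.Icc (0:ℝ) 1 ∧ p 1 ∈ Set.Icc (0:ℝ) 1}

def IsUnitSquare (S : Set E2) : Prop := ∃ f : E2 ≃ᵢ E2, S = f '' unitSq

/-- The vertices of the standard unit square. -/
def sqVerts : Set E2 :=
  {WithLp.toLp 2 (![0, 0] : Fin 2 → ℝ), WithLp.toLp 2 (![1, 0] : Fin 2 → ℝ), WithLp.toLp 2 (![1, 1] : Fin 2 → ℝ), WithLp.toLp 2 (![0, 1] : Fin 2 → ℝ)}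

/-- The four sides of the standard unit square. -/
def sqSides : Set (Set E2) :=
  { {p | p 1 = 0 ∧ p 0 ∈ Set.Icc (0:ℝ) 1}, {p | p 0 = 1 ∧ p 1 ∈ Set.Icc (0:ℝ) 1},
    {p | p 1 = 1 ∧ p 0 ∈ Set.Icc (0:ℝ) 1}, {p | p 0 = 0 ∧ p 1 ∈ Set.Icc (0:ℝ) 1} }

/-- `lmax x` is the largest `y` such that an L-shape with legs of lengths `x` and `y`
(two orthogonal segments sharing an endpoint) fits in some unit square. -/
def lmax (x : ℝ) : ℝ :=
  sSup {y | 0 ≤ y ∧ ∃ (S : Set E2) (c p q : E2), IsUnitSquare S ∧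
    dist c p = x ∧ dist c q = y ∧ inner ℝ (p - c) (q - c) = (0:ℝ) ∧
    segment ℝ c p ∪ segment ℝ c q ⊆ S}

/-!
Isometries of the plane are affine (Mazur–Ulam), so they preserve lengths and orthogonality and
we may assume the square is `[0,1]²`. Put `d = p - c`, `e = q - c`, so `|d| = x`, `|e| = y` and
`d₀e₀ = -d₁e₁`; after possibly swapping the axes, `d₀e₀ ≤ 0`, i.e. `p` and `q` lie on opposite
sides of `c` horizontally, whence `|d₀| + |e₀| = |p₀ - q₀| ≤ 1`. Orthogonality in the plane gives
`x|e₀| = y|d₁|`, so `A = |d₀|`, `B = |d₁|` satisfy `A² + B² = x²`, `B ≤ 1` and `xA + yB ≤ x`.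
Eliminating `A` yields `y ≤ x(1 - √(x² - 1))`, with equality only for `B = 1` and
`|p₀ - q₀| = 1`: then `p` is a vertex, `q` lies on the opposite vertical side and `c` on the
opposite horizontal side. For `x ≤ √2` the bound is attained with `s = √(x² - 1)` by
`c = (1, s)`, `p = (0, 0)`, `q = (1 - (1 - s)s, 1)`.
-/

theorem IsometryEquiv.inner_map_sub_map_sub {E F : Type*} [NormedAddCommGroup E]
    [InnerProductSpace ℝ E] [NormedAddCommGroup F] [InnerProductSpace ℝ F] (f : E ≃ᵢ F)
    (a b c : E) : inner ℝ (f b - f a) (f c - f a) = inner ℝ (b - a) (c - a) := by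
  have hf (u v : E) : f u - f v = f.toRealAffineIsometryEquiv.linearIsometryEquiv (u - v) :=
    (f.toRealAffineIsometryEquiv.map_vsub u v).symm
  rw [hf, hf, LinearIsometryEquiv.inner_map_map]

theorem exists_preimage_of_segment_union_subset_image {E F : Type*} [AddCommGroup F]
    [Module ℝ F] {f : E → F} {K : Set E} {c p q : F}
    (h : segment ℝ c p ∪ segment ℝ c q ⊆ f '' K) :
    ∃ c' ∈ K, ∃ p' ∈ K, ∃ q' ∈ K, f c' = c ∧ f p' = p ∧ f q' = q := by
  obtain ⟨c', hc', rfl⟩ := h (Or.inl (left_mem_segment ℝ c p))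
  obtain ⟨p', hp', rfl⟩ := h (Or.inl (right_mem_segment ℝ _ p))
  obtain ⟨q', hq', rfl⟩ := h (Or.inr (right_mem_segment ℝ _ q))
  exact ⟨c', hc', p', hp', q', hq', rfl, rfl, rfl⟩

namespace E2

theorem dist_sq_eq (a b : E2) : dist a b ^ 2 = (b 0 - a 0) ^ 2 + (b 1 - a 1) ^ 2 := by
  rw [EuclideanSpace.dist_eq, Real.sq_sqrt (by positivity), Fin.sum_univ_two, Real.dist_eq,
    Real.dist_eq, sq_abs, sq_abs, ← neg_sub (b 0), ← neg_sub (b 1), neg_sq, neg_sq]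

theorem inner_eq (u v : E2) : inner ℝ u v = u 0 * v 0 + u 1 * v 1 := by
  simp only [PiLp.inner_apply, RCLike.inner_apply, conj_trivial, Fin.sum_univ_two]
  ring

end E2

theorem abs_sub_add_abs_sub_of_mul_nonpos {a b t : ℝ} (h : (a - t) * (b - t) ≤ 0) :
    |a - t| + |b - t| = |a - b| := by
  rcases abs_cases (a - t) with ⟨h₁, s₁⟩ | ⟨h₁, s₁⟩ <;>
    rcases abs_cases (b - t) with ⟨h₂, s₂⟩ | ⟨h₂, s₂⟩ <;>
    rcases abs_cases (a - b) with ⟨h₃, s₃⟩ | ⟨h₃, s₃⟩ <;> rw [h₁, h₂, h₃] <;> nlinarith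

theorem eq_one_sub_of_abs_sub_eq_one {a b : ℝ} (ha : a ∈ Icc (0:ℝ) 1) (hb : b ∈ Icc (0:ℝ) 1)
    (h : |a - b| = 1) : (a = 0 ∨ a = 1) ∧ b = 1 - a := by
  rcases (abs_eq zero_le_one).mp h with h | h
  · exact ⟨Or.inr (by linarith [ha.2, hb.1]), by linarith [ha.2, hb.1]⟩
  · exact ⟨Or.inl (by linarith [ha.1, hb.2]), by linarith [ha.1, hb.2]⟩

theorem mul_abs_eq_mul_abs_of_orthogonal {x y d₀ d₁ e₀ e₁ : ℝ} (hx : 0 ≤ x) (hy : 0 ≤ y)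
    (hd : d₀ ^ 2 + d₁ ^ 2 = x ^ 2) (he : e₀ ^ 2 + e₁ ^ 2 = y ^ 2)
    (ho : d₀ * e₀ + d₁ * e₁ = 0) : x * |e₀| = y * |d₁| := by
  refine (pow_left_inj₀ (by positivity) (by positivity) two_ne_zero).mp ?_
  rw [mul_pow, mul_pow, sq_abs, sq_abs]
  linear_combination -e₀ ^ 2 * hd + d₁ ^ 2 * he + (d₀ * e₀ - d₁ * e₁) * ho

theorem sq_sub_one_sub_mul_sq {s A B : ℝ} (h : A ^ 2 + B ^ 2 = 1 + s ^ 2) :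
    A ^ 2 - (1 - (1 - s) * B) ^ 2 = (1 - B) * ((1 + (1 - s) ^ 2) * B + s ^ 2) := by
  linear_combination h

theorem one_sub_mul_le_of_sq_add_sq_eq {s A B : ℝ} (hA : 0 ≤ A) (hB : 0 ≤ B) (hB₁ : B ≤ 1)
    (h : A ^ 2 + B ^ 2 = 1 + s ^ 2) : 1 - (1 - s) * B ≤ A := by
  rcases le_or_gt (1 - (1 - s) * B) 0 with hneg | hpos
  · exact hneg.trans hA
  refine (pow_le_pow_iff_left₀ hpos.le hA two_ne_zero).mp ?_
  have : 0 ≤ (1 - B) * ((1 + (1 - s) ^ 2) * B + s ^ 2) := by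
    apply mul_nonneg <;> nlinarith
  linarith [sq_sub_one_sub_mul_sq h]

theorem eq_one_of_sq_add_sq_eq {s A B : ℝ} (hs : 0 < s) (hB : 0 ≤ B)
    (h : A ^ 2 + B ^ 2 = 1 + s ^ 2) (hA : A = 1 - (1 - s) * B) : B = 1 := by
  have hzero := sq_sub_one_sub_mul_sq h
  rw [hA, sub_self, eq_comm] at hzero
  have hpos : 0 < (1 + (1 - s) ^ 2) * B + s ^ 2 := by positivity
  linarith [(mul_eq_zero.mp hzero).resolve_right hpos.ne']

theorem lShape_coord_bound {x y c₀ c₁ p₀ p₁ q₀ q₁ : ℝ} (hx : 1 < x) (hy : 0 ≤ y)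
    (hc₁ : c₁ ∈ Icc (0:ℝ) 1) (hp₀ : p₀ ∈ Icc (0:ℝ) 1) (hp₁ : p₁ ∈ Icc (0:ℝ) 1)
    (hq₀ : q₀ ∈ Icc (0:ℝ) 1)
    (hd : (p₀ - c₀) ^ 2 + (p₁ - c₁) ^ 2 = x ^ 2) (he : (q₀ - c₀) ^ 2 + (q₁ - c₁) ^ 2 = y ^ 2)
    (horth : (p₀ - c₀) * (q₀ - c₀) + (p₁ - c₁) * (q₁ - c₁) = 0)
    (hsign : (p₀ - c₀) * (q₀ - c₀) ≤ 0) :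
    y ≤ x - x * √(x ^ 2 - 1) ∧
      (y = x - x * √(x ^ 2 - 1) →
        (p₀ = 0 ∨ p₀ = 1) ∧ q₀ = 1 - p₀ ∧ (p₁ = 0 ∨ p₁ = 1) ∧ c₁ = 1 - p₁) := by
  set s := √(x ^ 2 - 1)
  set A := |p₀ - c₀|
  set B := |p₁ - c₁|
  have hs : 0 < s := Real.sqrt_pos.mpr (by nlinarith)
  have hAB : A ^ 2 + B ^ 2 = 1 + s ^ 2 := by
    rw [sq_abs, sq_abs, Real.sq_sqrt (by nlinarith), hd]; ring
  have hB₁ : B ≤ 1 := by simpa using abs_sub_le_of_le_of_le hp₁.1 hp₁.2 hc₁.1 hc₁.2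
  have hpq : |p₀ - q₀| ≤ 1 := by simpa using abs_sub_le_of_le_of_le hp₀.1 hp₀.2 hq₀.1 hq₀.2
  have hspan : A + |q₀ - c₀| = |p₀ - q₀| := abs_sub_add_abs_sub_of_mul_nonpos hsign
  have hside : x * |q₀ - c₀| = y * B :=
    mul_abs_eq_mul_abs_of_orthogonal (by linarith) hy hd he horth
  have hsum : x * A + y * B = x * |p₀ - q₀| := by rw [← hside, ← hspan]; ring
  have hA₁ : A ≤ 1 := by
    have : x * A ≤ x * 1 := by nlinarith [abs_nonneg (p₁ - c₁)]
    exact le_of_mul_le_mul_left this (by linarith)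
  have hB : 0 < B := by
    rcases (abs_nonneg (p₁ - c₁)).eq_or_lt with h | h
    · nlinarith [abs_nonneg (p₀ - c₀)]
    · exact h
  have hlow := one_sub_mul_le_of_sq_add_sq_eq (abs_nonneg _) hB.le hB₁ hAB
  have hxA := mul_le_mul_of_nonneg_left hlow (by linarith : 0 ≤ x)
  have hyB : y * B ≤ (x - x * s) * B := by nlinarith
  refine ⟨le_of_mul_le_mul_right hyB hB, fun hy_eq ↦ ?_⟩
  have hA_eq : A = 1 - (1 - s) * B := by
    refine le_antisymm (le_of_mul_le_mul_left ?_ (by linarith : 0 < x)) hlow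
    rw [hy_eq] at hsum
    nlinarith
  have hB_eq : B = 1 := eq_one_of_sq_add_sq_eq hs hB.le hAB hA_eq
  have hpq_eq : |p₀ - q₀| = 1 := by
    refine mul_left_cancel₀ (by linarith : x ≠ 0) ?_
    rw [← hsum, hA_eq, hB_eq, hy_eq]; ring
  obtain ⟨hp₀', hq₀'⟩ := eq_one_sub_of_abs_sub_eq_one hp₀ hq₀ hpq_eq
  obtain ⟨hp₁', hc₁'⟩ := eq_one_sub_of_abs_sub_eq_one hp₁ hc₁ hB_eq
  exact ⟨hp₀', hq₀', hp₁', hc₁'⟩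

theorem lShape_unitSq_bound {x : ℝ} (hx : 1 < x) {c p q : E2} (hc : c ∈ unitSq)
    (hp : p ∈ unitSq) (hq : q ∈ unitSq) (hcp : dist c p = x)
    (horth : inner ℝ (p - c) (q - c) = (0:ℝ)) :
    dist c q ≤ x - x * √(x ^ 2 - 1) ∧
      (dist c q = x - x * √(x ^ 2 - 1) →
        (p 0 = 0 ∨ p 0 = 1) ∧ (p 1 = 0 ∨ p 1 = 1) ∧
          (q 0 = 1 - p 0 ∧ c 1 = 1 - p 1 ∨ q 1 = 1 - p 1 ∧ c 0 = 1 - p 0)) := by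
  have hd := E2.dist_sq_eq c p
  have he := E2.dist_sq_eq c q
  rw [hcp] at hd
  rw [E2.inner_eq] at horth
  simp only [PiLp.sub_apply] at horth
  rcases le_total ((p 0 - c 0) * (q 0 - c 0)) 0 with hsign | hsign
  · obtain ⟨hbound, hcase⟩ := lShape_coord_bound hx dist_nonneg hc.2 hp.1 hp.2 hq.1 hd.symm
      he.symm horth hsign
    exact ⟨hbound, fun h ↦ by obtain ⟨h₁, h₂, h₃, h₄⟩ := hcase h; exact ⟨h₁, h₃, .inl ⟨h₂, h₄⟩⟩⟩
  · obtain ⟨hbound, hcase⟩ := lShape_coord_bound (c₀ := c 1) (q₁ := q 0) hx dist_nonneg hc.1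
      hp.2 hp.1 hq.2 (by linarith) (by linarith) (by linarith) (by linarith)
    exact ⟨hbound, fun h ↦ by obtain ⟨h₁, h₂, h₃, h₄⟩ := hcase h; exact ⟨h₃, h₁, .inr ⟨h₂, h₄⟩⟩⟩

theorem convex_unitSq : Convex ℝ unitSq :=
  ((convex_Icc 0 1).linear_preimage (EuclideanSpace.proj 0 : E2 →L[ℝ] ℝ).toLinearMap).inter
    ((convex_Icc 0 1).linear_preimage (EuclideanSpace.proj 1 : E2 →L[ℝ] ℝ).toLinearMap)

theorem isUnitSquare_unitSq : IsUnitSquare unitSq := ⟨IsometryEquiv.refl E2, (image_id _).symm⟩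

def lShapeLengths (x : ℝ) : Set ℝ :=
  {y | 0 ≤ y ∧ ∃ (S : Set E2) (c p q : E2), IsUnitSquare S ∧
    dist c p = x ∧ dist c q = y ∧ inner ℝ (p - c) (q - c) = (0:ℝ) ∧
    segment ℝ c p ∪ segment ℝ c q ⊆ S}

theorem mem_lShapeLengths {x : ℝ} (hx₁ : 1 < x) (hx₂ : x ≤ √2) :
    x - x * √(x ^ 2 - 1) ∈ lShapeLengths x := by
  set s := √(x ^ 2 - 1)
  have hss : s ^ 2 = x ^ 2 - 1 := Real.sq_sqrt (by nlinarith)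
  have hs₀ : 0 ≤ s := Real.sqrt_nonneg _
  have hs₁ : s ≤ 1 := by
    rw [Real.sqrt_le_one]
    nlinarith [Real.sq_sqrt (zero_le_two : (0:ℝ) ≤ 2), Real.sqrt_nonneg 2]
  set c : E2 := !₂[1, s]
  set p : E2 := !₂[0, 0]
  set q : E2 := !₂[1 - (1 - s) * s, 1]
  have hc : c ∈ unitSq := by simp [c, unitSq, hs₀, hs₁]
  have hp : p ∈ unitSq := by simp [p, unitSq]
  have hq : q ∈ unitSq := by
    refine ⟨⟨?_, ?_⟩, ?_, ?_⟩ <;>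
      simp only [q, Matrix.cons_val_zero, Matrix.cons_val_one, Matrix.cons_val_fin_one] <;>
      nlinarith
  refine ⟨by nlinarith, unitSq, c, p, q, isUnitSquare_unitSq, ?_, ?_, ?_,
    union_subset (convex_unitSq.segment_subset hc hp) (convex_unitSq.segment_subset hc hq)⟩
  · refine (pow_left_inj₀ dist_nonneg (by linarith) two_ne_zero).mp ?_
    rw [E2.dist_sq_eq]
    simp only [c, p, Matrix.cons_val_zero, Matrix.cons_val_one, Matrix.cons_val_fin_one]
    linear_combination hss
  · refine (pow_left_inj₀ dist_nonneg (by nlinarith) two_ne_zero).mp ?_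
    rw [E2.dist_sq_eq]
    simp only [c, q, Matrix.cons_val_zero, Matrix.cons_val_one, Matrix.cons_val_fin_one]
    linear_combination (1 - s) ^ 2 * hss
  · rw [E2.inner_eq]
    simp only [c, p, q, PiLp.sub_apply, Matrix.cons_val_zero, Matrix.cons_val_one,
      Matrix.cons_val_fin_one]
    ring

theorem mem_upperBounds_lShapeLengths {x : ℝ} (hx : 1 < x) :
    x - x * √(x ^ 2 - 1) ∈ upperBounds (lShapeLengths x) := by
  rintro y ⟨-, S, c, p, q, ⟨f, rfl⟩, hcp, rfl, horth, hsub⟩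
  obtain ⟨c, hc, p, hp, q, hq, rfl, rfl, rfl⟩ := exists_preimage_of_segment_union_subset_image hsub
  rw [f.dist_eq] at hcp ⊢
  rw [f.inner_map_sub_map_sub] at horth
  exact (lShape_unitSq_bound hx hc hp hq hcp horth).1

theorem lmax_eq {x : ℝ} (hx₁ : 1 < x) (hx₂ : x ≤ √2) : lmax x = x - x * √(x ^ 2 - 1) :=
  show sSup (lShapeLengths x) = _ from
    IsGreatest.csSup_eq ⟨mem_lShapeLengths hx₁ hx₂, mem_upperBounds_lShapeLengths hx₁⟩

theorem sub_mul_sqrt_sq_sub_one_lt_one {x : ℝ} (hx : 1 < x) : x - x * √(x ^ 2 - 1) < 1 := by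
  have hs : x - 1 < √(x ^ 2 - 1) := (Real.lt_sqrt (by linarith)).mpr (by nlinarith)
  nlinarith

theorem mem_sqVerts {p : E2} (h₀ : p 0 = 0 ∨ p 0 = 1) (h₁ : p 1 = 0 ∨ p 1 = 1) :
    p ∈ sqVerts := by
  have hp : p = !₂[p 0, p 1] := by ext i; fin_cases i <;> rfl
  rw [hp]
  rcases h₀ with h₀ | h₀ <;> rcases h₁ with h₁ | h₁ <;> simp [sqVerts, h₀, h₁]

theorem mem_sqSides_of_fst {a : ℝ} (ha : a = 0 ∨ a = 1) :
    {p : E2 | p 0 = a ∧ p 1 ∈ Icc (0:ℝ) 1} ∈ sqSides := by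
  rcases ha with rfl | rfl <;> simp [sqSides]

theorem mem_sqSides_of_snd {b : ℝ} (hb : b = 0 ∨ b = 1) :
    {p : E2 | p 1 = b ∧ p 0 ∈ Icc (0:ℝ) 1} ∈ sqSides := by
  rcases hb with rfl | rfl <;> simp [sqSides]

theorem fst_side_ne_snd_side (a b : ℝ) :
    {p : E2 | p 0 = a ∧ p 1 ∈ Icc (0:ℝ) 1} ≠ {p : E2 | p 1 = b ∧ p 0 ∈ Icc (0:ℝ) 1} := by
  intro h
  have h₀ : !₂[a, 0] ∈ {p : E2 | p 1 = b ∧ p 0 ∈ Icc (0:ℝ) 1} := h ▸ by simp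
  have h₁ : !₂[a, 1] ∈ {p : E2 | p 1 = b ∧ p 0 ∈ Icc (0:ℝ) 1} := h ▸ by simp
  have : (0:ℝ) = 1 := h₀.1.trans h₁.1.symm
  norm_num at this

theorem exists_sqSides_opposite_of_vertex {c p q : E2} (hc : c ∈ unitSq) (hq : q ∈ unitSq)
    (hp₀ : p 0 = 0 ∨ p 0 = 1) (hp₁ : p 1 = 0 ∨ p 1 = 1)
    (h : q 0 = 1 - p 0 ∧ c 1 = 1 - p 1 ∨ q 1 = 1 - p 1 ∧ c 0 = 1 - p 0) :
    ∃ E₁ ∈ sqSides, ∃ E₂ ∈ sqSides, E₁ ≠ E₂ ∧ p ∉ E₁ ∧ p ∉ E₂ ∧ q ∈ E₁ ∧ c ∈ E₂ := by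
  have hflip {a : ℝ} (ha : a = 0 ∨ a = 1) : 1 - a = 0 ∨ 1 - a = 1 := by
    rcases ha with rfl | rfl <;> norm_num
  have hne {a : ℝ} (ha : a = 0 ∨ a = 1) : a ≠ 1 - a := by
    rcases ha with rfl | rfl <;> norm_num
  rcases h with ⟨hq₀, hc₁⟩ | ⟨hq₁, hc₀⟩
  · exact ⟨_, mem_sqSides_of_fst (hflip hp₀), _, mem_sqSides_of_snd (hflip hp₁),
      fst_side_ne_snd_side _ _, fun h ↦ hne hp₀ h.1, fun h ↦ hne hp₁ h.1, ⟨hq₀, hq.2⟩, ⟨hc₁, hc.1⟩⟩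
  · exact ⟨_, mem_sqSides_of_snd (hflip hp₁), _, mem_sqSides_of_fst (hflip hp₀),
      (fst_side_ne_snd_side _ _).symm, fun h ↦ hne hp₁ h.1, fun h ↦ hne hp₀ h.1, ⟨hq₁, hq.1⟩,
      ⟨hc₀, hc.2⟩⟩

theorem maximally_embedded_Lshape_general
    (x : ℝ) (hx1 : 1 < x) (hx2 : x ≤ Real.sqrt 2)
    (S : Set E2) (c p q : E2)
    (hlegp : dist c p = x) (hlegq : dist c q = lmax x)
    (horth : inner ℝ (p - c) (q - c) = (0:ℝ))
    (hsub : segment ℝ c p ∪ segment ℝ c q ⊆ S) :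
    lmax x < 1 ∧
    lmax x = x - x * Real.sqrt (x ^ 2 - 1) ∧
    ∀ f : E2 ≃ᵢ E2, S = f '' unitSq →
      p ∈ f '' sqVerts ∧
      ∃ E₁ ∈ sqSides, ∃ E₂ ∈ sqSides, f '' E₁ ≠ f '' E₂ ∧
        p ∉ f '' E₁ ∧ p ∉ f '' E₂ ∧ q ∈ f '' E₁ ∧ c ∈ f '' E₂ := by
  have hlmax := lmax_eq hx1 hx2
  refine ⟨hlmax ▸ sub_mul_sqrt_sq_sub_one_lt_one hx1, hlmax, fun f hS ↦ ?_⟩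
  subst hS
  obtain ⟨c, hc, p, hp, q, hq, rfl, rfl, rfl⟩ := exists_preimage_of_segment_union_subset_image hsub
  rw [f.dist_eq] at hlegp hlegq
  rw [f.inner_map_sub_map_sub] at horth
  obtain ⟨hp₀, hp₁, hsides⟩ := (lShape_unitSq_bound hx1 hc hp hq hlegp horth).2 (hlegq.trans hlmax)
  obtain ⟨E₁, hE₁, E₂, hE₂, hne, hpE₁, hpE₂, hqE₁, hcE₂⟩ :=
    exists_sqSides_opposite_of_vertex hc hq hp₀ hp₁ hsides
  simp only [f.injective.mem_set_image]
  exact ⟨mem_sqVerts hp₀ hp₁, E₁, hE₁, E₂, hE₂, (image_injective.mpr f.injective).ne hne,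
    hpE₁, hpE₂, hqE₁, hcE₂⟩

theorem maximally_embedded_Lshape
    (x : ℝ) (hx1 : 1 < x) (hx2 : x ≤ Real.sqrt 2)
    (S : Set E2) (c p q : E2) (hS : IsUnitSquare S)
    (hlegp : dist c p = x) (hlegq : dist c q = lmax x)
    (horth : inner ℝ (p - c) (q - c) = (0:ℝ))
    (hsub : segment ℝ c p ∪ segment ℝ c q ⊆ S) :
    lmax x < 1 ∧
    lmax x = x - x * Real.sqrt (x ^ 2 - 1) ∧
    ∀ f : E2 ≃ᵢ E2, S = f '' unitSq →
      p ∈ f '' sqVerts ∧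
      ∃ E₁ ∈ sqSides, ∃ E₂ ∈ sqSides, f '' E₁ ≠ f '' E₂ ∧
        p ∉ f '' E₁ ∧ p ∉ f '' E₂ ∧ q ∈ f '' E₁ ∧ c ∈ f '' E₂ :=
  maximally_embedded_Lshape_general x hx1 hx2 S c p q hlegp hlegq horth hsub

end
end

section
/- For any x with 1 ≤ x ≤ √2, a unit square can contain an L-shape with legs of lengths x and x - x·√(x² - 1). -/
/-! With `s = √(x² - 1) ∈ [0, 1]`, the L-shape with corner `(0, 1 - s)` and leg ends `(1, 1)` and
`(s (1 - s), 0)` lies in `[0, 1]²`: the first leg has length `√(1 + s²) = x`, and the second leg is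
the first one turned by a right angle and scaled by `1 - s`, so it has length `(1 - s) x`. -/

open Set Metric

noncomputable section

theorem mk_mem_unitSq {a b : ℝ} (ha : a ∈ Icc 0 1) (hb : b ∈ Icc 0 1) : !₂[a, b] ∈ unitSq :=
  ⟨ha, hb⟩

theorem dist_mk_two (a b c d : ℝ) : dist !₂[a, b] !₂[c, d] = √((a - c) ^ 2 + (b - d) ^ 2) := by
  simp [EuclideanSpace.dist_eq, Fin.sum_univ_two, Real.dist_eq, sq_abs]

theorem inner_sub_mk_two (a b c d e f : ℝ) :
    inner ℝ (!₂[a, b] - !₂[e, f]) (!₂[c, d] - !₂[e, f]) = (a - e) * (c - e) + (b - f) * (d - f) := by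
  simp [PiLp.inner_apply, Fin.sum_univ_two, mul_comm]

theorem exists_Lshape_subset_unitSq {s : ℝ} (hs0 : 0 ≤ s) (hs1 : s ≤ 1) :
    ∃ c p q : E2, dist c p = √(1 + s ^ 2) ∧ dist c q = (1 - s) * √(1 + s ^ 2) ∧
      inner ℝ (p - c) (q - c) = (0 : ℝ) ∧ segment ℝ c p ∪ segment ℝ c q ⊆ unitSq := by
  have hc : !₂[0, 1 - s] ∈ unitSq := mk_mem_unitSq ⟨le_rfl, zero_le_one⟩ ⟨by linarith, by linarith⟩
  have hp : !₂[1, 1] ∈ unitSq := mk_mem_unitSq ⟨zero_le_one, le_rfl⟩ ⟨zero_le_one, le_rfl⟩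
  have hq : !₂[s * (1 - s), 0] ∈ unitSq :=
    mk_mem_unitSq ⟨by nlinarith, by nlinarith⟩ ⟨le_rfl, zero_le_one⟩
  refine ⟨!₂[0, 1 - s], !₂[1, 1], !₂[s * (1 - s), 0], ?_, ?_, ?_, ?_⟩
  · rw [dist_mk_two]
    ring_nf
  · rw [dist_mk_two, show (0 - s * (1 - s)) ^ 2 + (1 - s - 0) ^ 2 = (1 - s) ^ 2 * (1 + s ^ 2) by ring,
      Real.sqrt_mul (sq_nonneg _), Real.sqrt_sq (sub_nonneg.2 hs1)]
  · rw [inner_sub_mk_two]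
    ring
  · exact union_subset (convex_unitSq.segment_subset hc hp) (convex_unitSq.segment_subset hc hq)

theorem Lshape_embeddable (x : ℝ) (hx1 : 1 ≤ x) (hx2 : x ≤ Real.sqrt 2) :
    ∃ (S : Set E2) (c p q : E2), IsUnitSquare S ∧
      dist c p = x ∧ dist c q = x - x * Real.sqrt (x ^ 2 - 1) ∧
      inner ℝ (p - c) (q - c) = (0:ℝ) ∧
      segment ℝ c p ∪ segment ℝ c q ⊆ S := by
  have hx_sq : x ^ 2 ≤ 2 := by
    simpa using pow_le_pow_left₀ (by linarith) hx2 2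
  have hs_sq : √(x ^ 2 - 1) ^ 2 = x ^ 2 - 1 := Real.sq_sqrt (by nlinarith)
  have hs1 : √(x ^ 2 - 1) ≤ 1 := Real.sqrt_le_one.2 (by linarith)
  have hleg : √(1 + √(x ^ 2 - 1) ^ 2) = x := by
    rw [hs_sq, add_sub_cancel, Real.sqrt_sq (by linarith)]
  obtain ⟨c, p, q, hcp, hcq, horth, hsub⟩ := exists_Lshape_subset_unitSq (Real.sqrt_nonneg _) hs1
  refine ⟨unitSq, c, p, q, isUnitSquare_unitSq, ?_, ?_, horth, hsub⟩
  · rw [hcp, hleg]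
  · rw [hcq, hleg]
    ring

end
end

section
/- For every integer n ≥ 4 with n ≡ 0 (mod 4), the boundary of a square of edge length 2 + (n-4)·√2/4 can be covered by n unit squares; i.e., S_bd(n) ≥ 2 + ((n-4)/4)·√2, and in fact S_bd(4) = 2 with S_bd(n+4) = S_bd(n) + √2. -/
open Set Metric

noncomputable section

/-- The axis-aligned square of edge length `a` with a corner at the origin. -/
def sqSet (a : ℝ) : Set E2 := {p | p 0 ∈ Set.Icc 0 a ∧ p 1 ∈ Set.Icc 0 a}

/-- `Sbd n`: the largest edge length of a square whose boundary can be covered by `n`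
unit squares. -/
def Sbd (n : ℕ) : ℝ :=
  sSup {s | 0 ≤ s ∧ ∃ F : Fin n → Set E2,
    (∀ i, IsUnitSquare (F i)) ∧ frontier (sqSet s) ⊆ ⋃ i, F i}

open MeasureTheory
open scoped Finset

/-!
Lower bound, for `n = 4 m`: put an axis-parallel unit square at each corner; a unit square turned
through 45° with a diagonal along a side covers a segment of length `√2` of it, and `m - 1` of
these fill the remaining `(m - 1) √2` of each side of length `2 + (m - 1) √2`.

Upper bound: a unit square has diameter `√2`, so once `s > 2` it meets at most two sides, and
then two adjacent ones. Parametrise each side by `t ∈ [0, s]`. A square meeting only side `k`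
covers at most `√2` of it. The squares at one corner cover at most `2 + (c - 1) √2` of its two
sides together, `c` being their number: a single square touching the two sides at parameters
`t` and `t'` satisfies `(s - t)² + t'² ≤ 2`, hence `(s - t) + t' ≤ 2`, and with `c ≥ 2` each
side gets at most `√2`. Adding up over the four sides, `4 s ≤ 8 + (n - 4) √2`.
-/

lemma E2.ext {p q : E2} (h₀ : p 0 = q 0) (h₁ : p 1 = q 1) : p = q := by
  ext i; fin_cases i <;> assumption

lemma dist_eq_sqrt (x y : E2) : dist x y = √((x 0 - y 0) ^ 2 + (x 1 - y 1) ^ 2) := by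
  simp [EuclideanSpace.dist_eq, Fin.sum_univ_two, Real.dist_eq, sq_abs]

lemma IsUnitSquare.dist_le {S : Set E2} (h : IsUnitSquare S) {x y : E2} (hx : x ∈ S)
    (hy : y ∈ S) : dist x y ≤ √2 := by
  obtain ⟨f, rfl⟩ := h
  obtain ⟨a, ⟨⟨ha0, ha0'⟩, ha1, ha1'⟩, rfl⟩ := hx
  obtain ⟨b, ⟨⟨hb0, hb0'⟩, hb1, hb1'⟩, rfl⟩ := hy
  rw [f.dist_eq, dist_eq_sqrt]
  gcongr
  nlinarith

lemma IsUnitSquare.image {S : Set E2} (h : IsUnitSquare S) (f : E2 ≃ᵢ E2) :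
    IsUnitSquare (f '' S) := by
  obtain ⟨g, rfl⟩ := h
  exact ⟨g.trans f, by rw [image_image]; rfl⟩

/-- Rotation taking `(1, 0)` to the unit vector `(a, b)`, followed by translation by `v`. -/
def rigidMotion (a b : ℝ) (hab : a ^ 2 + b ^ 2 = 1) (v : E2) : E2 ≃ᵢ E2 where
  toFun q := !₂[v 0 + a * q 0 - b * q 1, v 1 + b * q 0 + a * q 1]
  invFun p := !₂[a * (p 0 - v 0) + b * (p 1 - v 1), a * (p 1 - v 1) - b * (p 0 - v 0)]
  left_inv q := by
    refine E2.ext ?_ ?_ <;>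
      simp only [Matrix.cons_val_zero, Matrix.cons_val_one, Matrix.cons_val_fin_one]
    · linear_combination q 0 * hab
    · linear_combination q 1 * hab
  right_inv p := by
    refine E2.ext ?_ ?_ <;>
      simp only [Matrix.cons_val_zero, Matrix.cons_val_one, Matrix.cons_val_fin_one]
    · linear_combination (p 0 - v 0) * hab
    · linear_combination (p 1 - v 1) * hab
  isometry_toFun := Isometry.of_dist_eq fun x y => by
    simp only [dist_eq_sqrt, Matrix.cons_val_zero, Matrix.cons_val_one, Matrix.cons_val_fin_one]
    congr 1
    linear_combination ((x 0 - y 0) ^ 2 + (x 1 - y 1) ^ 2) * hab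

@[simp] lemma rigidMotion_apply (a b : ℝ) (hab : a ^ 2 + b ^ 2 = 1) (v q : E2) :
    rigidMotion a b hab v q = !₂[v 0 + a * q 0 - b * q 1, v 1 + b * q 0 + a * q 1] := rfl

/-- The quarter turn about the centre of `sqSet s`. -/
def rot (s : ℝ) : E2 ≃ᵢ E2 := rigidMotion 0 1 (by norm_num) !₂[s, 0]

@[simp] lemma rot_apply (s : ℝ) (q : E2) : rot s q = !₂[s - q 1, q 0] := by
  refine E2.ext ?_ ?_ <;> simp [rot]

lemma rot_pow_four (s : ℝ) : rot s ^ 4 = 1 := by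
  ext p i
  fin_cases i <;> simp [pow_succ]

lemma sqSet_eq_preimage (s : ℝ) :
    sqSet s = EuclideanSpace.equiv (Fin 2) ℝ ⁻¹' univ.pi fun _ => Icc 0 s := by
  ext p
  simp only [sqSet, mem_ofPred_eq, mem_preimage, mem_univ_pi, Fin.forall_fin_two]
  rfl

lemma mem_frontier_sqSet {s : ℝ} {p : E2} :
    p ∈ frontier (sqSet s) ↔ p ∈ sqSet s ∧ ¬(p 0 ∈ Ioo 0 s ∧ p 1 ∈ Ioo 0 s) := by
  have hcl : IsClosed (sqSet s) := by
    rw [sqSet_eq_preimage]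
    exact (isClosed_set_pi fun _ _ => isClosed_Icc).preimage (ContinuousLinearEquiv.continuous _)
  have hint : interior (sqSet s) = {p | p 0 ∈ Ioo 0 s ∧ p 1 ∈ Ioo 0 s} := by
    rw [sqSet_eq_preimage, ← ContinuousLinearEquiv.coe_toHomeomorph, ← Homeomorph.preimage_interior,
      interior_pi_set finite_univ]
    ext p
    simp only [interior_Icc, mem_preimage, mem_univ_pi, Fin.forall_fin_two]
    rfl
  show p ∈ closure _ \ interior _ ↔ _
  rw [hcl.closure_eq, hint]
  rfl

lemma rot_preimage_sqSet (s : ℝ) : rot s ⁻¹' sqSet s = sqSet s := by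
  ext p
  simp only [sqSet, mem_preimage, rot_apply, mem_ofPred_eq, mem_Icc, Matrix.cons_val_zero,
    Matrix.cons_val_one, Matrix.cons_val_fin_one]
  constructor <;> intro h <;> refine ⟨⟨?_, ?_⟩, ?_, ?_⟩ <;> linarith

lemma rot_pow_preimage_sqSet (s : ℝ) (j : ℕ) : ⇑(rot s ^ j) ⁻¹' sqSet s = sqSet s := by
  induction j with
  | zero => rfl
  | succ j ih => rw [pow_succ, IsometryEquiv.coe_mul, preimage_comp, ih, rot_preimage_sqSet]

/-- The point at parameter `t` on the `k`-th side of `sqSet s`; the sides are numbered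
counterclockwise from the bottom one and traversed counterclockwise. -/
def sidePt (s : ℝ) (k : ZMod 4) (t : ℝ) : E2 := (rot s ^ k.val) !₂[t, 0]

lemma rot_pow_val_add (s : ℝ) (k j : ZMod 4) :
    rot s ^ (k + j).val = rot s ^ k.val * rot s ^ j.val := by
  rw [ZMod.val_add, ← pow_eq_pow_mod _ (rot_pow_four s), pow_add]

lemma dist_sidePt_add (s : ℝ) (k j : ZMod 4) (t t' : ℝ) :
    dist (sidePt s k t) (sidePt s (k + j) t') = dist !₂[t, 0] ((rot s ^ j.val) !₂[t', 0]) := by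
  rw [sidePt, sidePt, rot_pow_val_add, IsometryEquiv.mul_apply, IsometryEquiv.dist_eq]

lemma dist_sidePt (s : ℝ) (k : ZMod 4) (t t' : ℝ) :
    dist (sidePt s k t) (sidePt s k t') = |t - t'| := by
  simpa [dist_eq_sqrt, Real.sqrt_sq_eq_abs] using dist_sidePt_add s k 0 t t'

lemma dist_sidePt_add_one_sq (s : ℝ) (k : ZMod 4) (t t' : ℝ) :
    dist (sidePt s k t) (sidePt s (k + 1) t') ^ 2 = (s - t) ^ 2 + t' ^ 2 := by
  rw [dist_sidePt_add, dist_eq_sqrt, Real.sq_sqrt (by positivity),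
    show (1 : ZMod 4).val = 1 from rfl, pow_one, rot_apply]
  simp only [Matrix.cons_val_zero, Matrix.cons_val_one, Matrix.cons_val_fin_one]
  ring

lemma le_dist_sidePt_add_two (s : ℝ) (k : ZMod 4) (t t' : ℝ) :
    s ≤ dist (sidePt s k t) (sidePt s (k + 2) t') := by
  rw [dist_sidePt_add, dist_eq_sqrt, show (2 : ZMod 4).val = 2 from rfl, pow_two (rot s),
    IsometryEquiv.mul_apply, rot_apply, rot_apply]
  refine (le_abs_self s).trans (Real.abs_le_sqrt ?_)
  simp only [Matrix.cons_val_zero, Matrix.cons_val_one, Matrix.cons_val_fin_one]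
  nlinarith

lemma sidePt_one (s t : ℝ) : sidePt s 1 t = !₂[s, t] := by
  refine E2.ext ?_ ?_ <;> simp [sidePt, show (1 : ZMod 4).val = 1 from rfl]

lemma sidePt_two (s t : ℝ) : sidePt s 2 t = !₂[s - t, s] := by
  refine E2.ext ?_ ?_ <;> simp [sidePt, show (2 : ZMod 4).val = 2 from rfl, pow_succ]

lemma sidePt_three (s t : ℝ) : sidePt s 3 t = !₂[0, s - t] := by
  refine E2.ext ?_ ?_ <;> simp [sidePt, show (3 : ZMod 4).val = 3 from rfl, pow_succ]

lemma sidePt_mem_frontier {s t : ℝ} (k : ZMod 4) (ht : t ∈ Icc 0 s) :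
    sidePt s k t ∈ frontier (sqSet s) := by
  have h := (rot s ^ k.val).toHomeomorph.preimage_frontier (sqSet s)
  rw [IsometryEquiv.coe_toHomeomorph, rot_pow_preimage_sqSet] at h
  rw [sidePt, ← mem_preimage, h, mem_frontier_sqSet]
  simp [sqSet, ht.1, ht.2, ht.1.trans ht.2]

lemma frontier_sqSet_subset_iUnion_sidePt (s : ℝ) :
    frontier (sqSet s) ⊆ ⋃ k : ZMod 4, sidePt s k '' Icc 0 s := by
  intro p hp
  obtain ⟨⟨⟨h₀, h₀'⟩, h₁, h₁'⟩, hb⟩ := mem_frontier_sqSet.1 hp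
  simp only [mem_Ioo, not_and_or, not_lt] at hb
  simp only [mem_iUnion, mem_image, mem_Icc]
  rcases hb with (hb | hb) | hb | hb
  · refine ⟨3, s - p 1, ⟨by linarith, by linarith⟩, (sidePt_three s _).trans (E2.ext ?_ ?_)⟩
    exacts [show 0 = p 0 by linarith, show s - (s - p 1) = p 1 by ring]
  · refine ⟨1, p 1, ⟨h₁, h₁'⟩, (sidePt_one s _).trans (E2.ext ?_ rfl)⟩
    exact show s = p 0 by linarith
  · refine ⟨0, p 0, ⟨h₀, h₀'⟩, E2.ext rfl ?_⟩
    exact show 0 = p 1 by linarith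
  · refine ⟨2, s - p 0, ⟨by linarith, by linarith⟩, (sidePt_two s _).trans (E2.ext ?_ ?_)⟩
    exacts [show s - (s - p 0) = p 0 by ring, show s = p 1 by linarith]

lemma sqrt_two_lt_two : √2 < 2 := by norm_num [Real.sqrt_lt']

lemma sq_sqrt_two_div_two : (√2 / 2) ^ 2 = 1 / 2 := by
  rw [div_pow, Real.sq_sqrt zero_le_two]; norm_num

/-- The unit square turned through 45°, with centre `(c, 0)` and two opposite
vertices on the horizontal axis. -/
def diamond (c : ℝ) : Set E2 :=
  rigidMotion (√2 / 2) (√2 / 2) (by linear_combination 2 * sq_sqrt_two_div_two)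
    !₂[c, -(√2 / 2)] '' unitSq

lemma mem_diamond {c t : ℝ} (ht : |t - c| ≤ √2 / 2) : !₂[t, 0] ∈ diamond c := by
  set h := √2 / 2
  have hh : h ^ 2 = 1 / 2 := sq_sqrt_two_div_two
  have hu : |h * (t - c)| ≤ 1 / 2 := by
    rw [abs_mul, abs_of_pos (by positivity : 0 < h), ← hh, sq]
    gcongr
  obtain ⟨hu₁, hu₂⟩ := abs_le.1 hu
  refine ⟨!₂[1 / 2 + h * (t - c), 1 / 2 - h * (t - c)], ⟨⟨?_, ?_⟩, ?_, ?_⟩, E2.ext ?_ ?_⟩ <;>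
    simp only [rigidMotion_apply, Matrix.cons_val_zero, Matrix.cons_val_one,
      Matrix.cons_val_fin_one]
  · linarith
  · linarith
  · linarith
  · linarith
  · linear_combination (2 * (t - c)) * hh
  · ring

/-- The squares along the bottom side: the corner square, then diamonds centred at
`1 + (r + 1/2) √2`, which cover consecutive segments of length `√2`. -/
def sideSquare : ℕ → Set E2
  | 0 => unitSq
  | r + 1 => diamond (1 + (r + 1 / 2) * √2)

lemma isUnitSquare_sideSquare (j : ℕ) : IsUnitSquare (sideSquare j) := by
  cases j with
  | zero => exact ⟨IsometryEquiv.refl E2, (image_id _).symm⟩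
  | succ r => exact ⟨_, rfl⟩

lemma exists_abs_sub_center_le {m : ℕ} {t : ℝ} (h₁ : 1 ≤ t) (h₂ : t < 1 + (m - 1) * √2) :
    ∃ r : ℕ, r + 1 < m ∧ |t - (1 + (r + 1 / 2) * √2)| ≤ √2 / 2 := by
  have hs : 0 < √2 := by positivity
  set r := ⌊(t - 1) / √2⌋₊
  have hr₁ : r * √2 ≤ t - 1 := (le_div_iff₀ hs).1 (Nat.floor_le (by positivity))
  have hr₂ : t - 1 < (r + 1) * √2 := (div_lt_iff₀ hs).1 (Nat.lt_floor_add_one _)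
  refine ⟨r, ?_, abs_le.2 ⟨by linarith, by linarith⟩⟩
  have : (r : ℝ) + 1 < m := by nlinarith
  exact_mod_cast this

lemma bottom_mem_sideSquare {m : ℕ} (hm : 0 < m) {t : ℝ} (ht : t ∈ Icc 0 (2 + (m - 1) * √2)) :
    !₂[t, 0] ∈ rot (2 + (m - 1) * √2) '' unitSq ∨ ∃ j < m, !₂[t, 0] ∈ sideSquare j := by
  obtain ⟨ht₀, ht₁⟩ := ht
  by_cases h₁ : t ≤ 1
  · exact Or.inr ⟨0, hm, by simp [sideSquare, unitSq, ht₀, h₁]⟩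
  by_cases h₂ : 1 + (m - 1) * √2 ≤ t
  · refine Or.inl ⟨!₂[0, 2 + (m - 1) * √2 - t], ⟨⟨le_rfl, zero_le_one⟩, ?_, ?_⟩, ?_⟩
    · exact show 0 ≤ 2 + (m - 1) * √2 - t by linarith
    · exact show 2 + (m - 1) * √2 - t ≤ 1 by linarith
    · rw [rot_apply]
      exact E2.ext (show 2 + (m - 1) * √2 - (2 + (m - 1) * √2 - t) = t by ring) rfl
  obtain ⟨r, hr, hrt⟩ := exists_abs_sub_center_le (m := m) (t := t) (by linarith) (by linarith)
  exact Or.inr ⟨r + 1, hr, mem_diamond hrt⟩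

lemma frontier_subset_iUnion_sideSquare {m : ℕ} (hm : 0 < m) :
    frontier (sqSet (2 + (m - 1) * √2)) ⊆
      ⋃ i : ZMod 4 × Fin m, ⇑(rot (2 + (m - 1) * √2) ^ i.1.val) '' sideSquare i.2 := by
  set s := 2 + (m - 1) * √2
  intro p hp
  obtain ⟨k, t, ht, rfl⟩ := mem_iUnion.1 (frontier_sqSet_subset_iUnion_sidePt s hp)
  simp only [mem_iUnion, Prod.exists]
  rcases bottom_mem_sideSquare hm ht with ⟨q, hq, hqt⟩ | ⟨j, hj, hjt⟩
  · refine ⟨k + 1, ⟨0, hm⟩, q, hq, ?_⟩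
    show (rot s ^ (k + 1).val) q = sidePt s k t
    rw [rot_pow_val_add, IsometryEquiv.mul_apply, show (1 : ZMod 4).val = 1 from rfl, pow_one,
      hqt]
    rfl
  · exact ⟨k, ⟨j, hj⟩, !₂[t, 0], hjt, rfl⟩

lemma exists_fin_cover {ι : Type*} [Fintype ι] {n : ℕ} (hn : Fintype.card ι = n)
    {G : ι → Set E2} (hG : ∀ i, IsUnitSquare (G i)) {X : Set E2} (hX : X ⊆ ⋃ i, G i) :
    ∃ F : Fin n → Set E2, (∀ i, IsUnitSquare (F i)) ∧ X ⊆ ⋃ i, F i := by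
  set e := Fintype.equivFinOfCardEq hn
  refine ⟨G ∘ e.symm, fun i => hG _, ?_⟩
  exact hX.trans (e.symm.surjective.iUnion_comp G).ge

lemma volume_real_le_of_forall_abs_sub_le {A : Set ℝ} {d : ℝ} (hd : 0 ≤ d)
    (h : ∀ t ∈ A, ∀ t' ∈ A, |t - t'| ≤ d) : volume.real A ≤ d := by
  refine ENNReal.toReal_le_of_le_ofReal hd ((Real.volume_le_diam A).trans (ediam_le ?_))
  intro t ht t' ht'
  rw [edist_dist, Real.dist_eq]
  exact ENNReal.ofReal_le_ofReal (h t ht t' ht')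

lemma volume_real_le_of_subset_Icc {A : Set ℝ} {a b : ℝ} (h : A ⊆ Icc a b) (hab : a ≤ b) :
    volume.real A ≤ b - a :=
  (measureReal_mono h measure_Icc_lt_top.ne).trans (Real.volume_real_Icc_of_le hab).le

lemma volume_real_add_volume_real_le {A B : Set ℝ} {s c : ℝ} (hA : A ⊆ Iic s) (hB : B ⊆ Ici 0)
    (hA₀ : A.Nonempty) (hB₀ : B.Nonempty) (h : ∀ t ∈ A, ∀ t' ∈ B, s - t + t' ≤ c) :
    volume.real A + volume.real B ≤ c := by
  obtain ⟨t₀, ht₀⟩ := hA₀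
  have hA' : ∀ t' ∈ B, volume.real A ≤ c - t' := fun t' ht' => by
    have := volume_real_le_of_subset_Icc (a := s - c + t') (b := s)
      (fun t ht => ⟨by linarith [h t ht t' ht'], hA ht⟩)
      (by linarith [h t₀ ht₀ t' ht', mem_Iic.1 (hA ht₀)])
    linarith
  obtain ⟨t₁, ht₁⟩ := hB₀
  have := volume_real_le_of_subset_Icc (a := 0) (b := c - volume.real A)
    (fun t' ht' => ⟨hB ht', by linarith [hA' t' ht']⟩)
    (by linarith [hA' t₁ ht₁, mem_Ici.1 (hB ht₁)])
  linarith

lemma card_adjacent_add_card_isolated_le_one (P : ZMod 4 → Prop) [DecidablePred P]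
    (h : ∀ k, P k → ¬P (k + 2)) :
    #{k | P k ∧ P (k + 1)} + #{k | P k ∧ ¬P (k + 1) ∧ ¬P (k - 1)} ≤ 1 := by
  have key : ∀ b : ZMod 4 → Bool, (∀ k, b k → ¬b (k + 2)) →
      #{k | b k ∧ b (k + 1)} + #{k | b k ∧ ¬b (k + 1) ∧ ¬b (k - 1)} ≤ 1 := by
    decide
  simpa using key (fun k => decide (P k)) (by simpa using h)

def sideTrace (s : ℝ) (S : Set E2) (k : ZMod 4) : Set ℝ := Icc 0 s ∩ sidePt s k ⁻¹' S

section Trace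

variable {s : ℝ} {S : Set E2} {k : ZMod 4}

lemma volume_real_sideTrace_le (hS : ∀ x ∈ S, ∀ y ∈ S, dist x y ≤ √2) :
    volume.real (sideTrace s S k) ≤ √2 :=
  volume_real_le_of_forall_abs_sub_le (by positivity) fun t ht t' ht' =>
    dist_sidePt s k t t' ▸ hS _ ht.2 _ ht'.2

lemma sq_add_sq_le_of_mem_sideTrace (hS : ∀ x ∈ S, ∀ y ∈ S, dist x y ≤ √2) {t t' : ℝ}
    (ht : t ∈ sideTrace s S k) (ht' : t' ∈ sideTrace s S (k + 1)) :
    (s - t) ^ 2 + t' ^ 2 ≤ 2 := by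
  rw [← dist_sidePt_add_one_sq, ← Real.sq_sqrt zero_le_two]
  exact pow_le_pow_left₀ dist_nonneg (hS _ ht.2 _ ht'.2) 2

lemma sub_le_sqrt_two_of_mem_sideTrace (hS : ∀ x ∈ S, ∀ y ∈ S, dist x y ≤ √2) {t : ℝ}
    (ht : t ∈ sideTrace s S k) (h : (sideTrace s S (k + 1)).Nonempty) : s - t ≤ √2 := by
  obtain ⟨t', ht'⟩ := h
  have := sq_add_sq_le_of_mem_sideTrace hS ht ht'
  exact (le_abs_self _).trans (Real.abs_le_sqrt (by nlinarith))

lemma le_sqrt_two_of_mem_sideTrace (hS : ∀ x ∈ S, ∀ y ∈ S, dist x y ≤ √2) {t' : ℝ}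
    (ht' : t' ∈ sideTrace s S (k + 1)) (h : (sideTrace s S k).Nonempty) : t' ≤ √2 := by
  obtain ⟨t, ht⟩ := h
  have := sq_add_sq_le_of_mem_sideTrace hS ht ht'
  exact (le_abs_self _).trans (Real.abs_le_sqrt (by nlinarith))

lemma le_sqrt_two_of_nonempty_sideTrace_add_two (hS : ∀ x ∈ S, ∀ y ∈ S, dist x y ≤ √2)
    (h : (sideTrace s S k).Nonempty) (h₂ : (sideTrace s S (k + 2)).Nonempty) : s ≤ √2 := by
  obtain ⟨t, ht⟩ := h
  obtain ⟨t', ht'⟩ := h₂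
  exact (le_dist_sidePt_add_two s k t t').trans (hS _ ht.2 _ ht'.2)

end Trace

lemma sum_card_eq_sum_card_filter_mem {α β : Type*} [Fintype α] [Fintype β] [DecidableEq α]
    (T : β → Finset α) : ∑ b, #(T b) = ∑ a, #{b | a ∈ T b} := by
  simpa [Finset.bipartiteAbove, Finset.bipartiteBelow, Finset.filter_univ_mem] using
    (Finset.sum_card_bipartiteAbove_eq_sum_card_bipartiteBelow (fun b a => a ∈ T b)
      (s := Finset.univ) (t := Finset.univ))

section Cover

variable {ι : Type*} [Fintype ι] {s : ℝ} {F : ι → Set E2}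

open Classical in
def cornerSquares (s : ℝ) (F : ι → Set E2) (k : ZMod 4) : Finset ι :=
  {i | (sideTrace s (F i) k).Nonempty ∧ (sideTrace s (F i) (k + 1)).Nonempty}

open Classical in
def isolatedSquares (s : ℝ) (F : ι → Set E2) (k : ZMod 4) : Finset ι :=
  {i | (sideTrace s (F i) k).Nonempty ∧ ¬(sideTrace s (F i) (k + 1)).Nonempty ∧
    ¬(sideTrace s (F i) (k - 1)).Nonempty}

lemma mem_cornerSquares {i : ι} {k : ZMod 4} : i ∈ cornerSquares s F k ↔
    (sideTrace s (F i) k).Nonempty ∧ (sideTrace s (F i) (k + 1)).Nonempty := by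
  simp [cornerSquares]

lemma mem_isolatedSquares {i : ι} {k : ZMod 4} : i ∈ isolatedSquares s F k ↔
    (sideTrace s (F i) k).Nonempty ∧ ¬(sideTrace s (F i) (k + 1)).Nonempty ∧
      ¬(sideTrace s (F i) (k - 1)).Nonempty := by
  simp [isolatedSquares]

/-- Near a corner, several squares reach no further along either side than `√2`, while a single
square covers at most `2` in total since `(s - t)² + t'² ≤ 2`. -/
lemma volume_real_corner_le (hF : ∀ i, ∀ x ∈ F i, ∀ y ∈ F i, dist x y ≤ √2) (k : ZMod 4) :
    volume.real (⋃ i ∈ cornerSquares s F k, sideTrace s (F i) k) +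
        volume.real (⋃ i ∈ cornerSquares s F k, sideTrace s (F i) (k + 1)) ≤
      2 + (#(cornerSquares s F k) - 1) * √2 := by
  have h2 := sqrt_two_lt_two
  rcases (cornerSquares s F k).eq_empty_or_nonempty with hT | ⟨i₀, hi₀⟩
  · simp [hT]
  obtain ⟨⟨t₀, ht₀⟩, ⟨t₁, ht₁⟩⟩ := mem_cornerSquares.1 hi₀
  refine volume_real_add_volume_real_le (s := s)
    (iUnion₂_subset fun i _ => inter_subset_left.trans Icc_subset_Iic_self)
    (iUnion₂_subset fun i _ => inter_subset_left.trans Icc_subset_Ici_self)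
    ⟨t₀, mem_biUnion hi₀ ht₀⟩ ⟨t₁, mem_biUnion hi₀ ht₁⟩ ?_
  intro t ht t' ht'
  obtain ⟨i, hi, ht⟩ := mem_iUnion₂.1 ht
  obtain ⟨j, hj, ht'⟩ := mem_iUnion₂.1 ht'
  by_cases hij : i = j
  · subst hij
    have := sq_add_sq_le_of_mem_sideTrace (hF i) ht ht'
    have hsum : s - t + t' ≤ 2 := by nlinarith [sq_nonneg (s - t - t')]
    have hT : (1 : ℝ) ≤ #(cornerSquares s F k) := by exact_mod_cast Finset.card_pos.2 ⟨i, hi⟩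
    nlinarith [Real.sqrt_nonneg 2]
  · have hT : (2 : ℝ) ≤ #(cornerSquares s F k) := by
      exact_mod_cast Finset.one_lt_card.2 ⟨i, hi, j, hj, hij⟩
    have := sub_le_sqrt_two_of_mem_sideTrace (hF i) ht (mem_cornerSquares.1 hi).2
    have := le_sqrt_two_of_mem_sideTrace (hF j) ht' (mem_cornerSquares.1 hj).1
    nlinarith [Real.sqrt_nonneg 2]

lemma le_volume_real_side (hF : ∀ i, ∀ x ∈ F i, ∀ y ∈ F i, dist x y ≤ √2) (hs : 0 ≤ s)
    (hcov : frontier (sqSet s) ⊆ ⋃ i, F i) (k : ZMod 4) :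
    s ≤ volume.real (⋃ i ∈ cornerSquares s F k, sideTrace s (F i) k) +
      volume.real (⋃ i ∈ cornerSquares s F (k - 1), sideTrace s (F i) k) +
      #(isolatedSquares s F k) * √2 := by
  set A := ⋃ i ∈ cornerSquares s F k, sideTrace s (F i) k
  set B := ⋃ i ∈ cornerSquares s F (k - 1), sideTrace s (F i) k
  set C := ⋃ i ∈ isolatedSquares s F k, sideTrace s (F i) k
  have hcover : Icc 0 s ⊆ A ∪ B ∪ C := by
    intro t ht
    obtain ⟨i, hi⟩ := mem_iUnion.1 (hcov (sidePt_mem_frontier k ht))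
    have hti : t ∈ sideTrace s (F i) k := ⟨ht, hi⟩
    by_cases h₁ : (sideTrace s (F i) (k + 1)).Nonempty
    · exact Or.inl (Or.inl (mem_biUnion (mem_cornerSquares.2 ⟨⟨t, hti⟩, h₁⟩) hti))
    by_cases h₂ : (sideTrace s (F i) (k - 1)).Nonempty
    · refine Or.inl (Or.inr (mem_biUnion (mem_cornerSquares.2 ⟨h₂, ?_⟩) hti))
      rw [sub_add_cancel]
      exact ⟨t, hti⟩
    · exact Or.inr (mem_biUnion (mem_isolatedSquares.2 ⟨⟨t, hti⟩, h₁, h₂⟩) hti)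
  have hfin : volume (A ∪ B ∪ C) ≠ ⊤ := by
    refine ((measure_mono ?_).trans_lt (measure_Icc_lt_top (a := 0) (b := s))).ne
    simp only [A, B, C, union_subset_iff, iUnion₂_subset_iff]
    exact ⟨⟨fun _ _ => inter_subset_left, fun _ _ => inter_subset_left⟩,
      fun _ _ => inter_subset_left⟩
  have hC : volume.real C ≤ #(isolatedSquares s F k) * √2 := by
    rw [← nsmul_eq_mul]
    exact (measureReal_biUnion_finset_le _ _).trans
      (Finset.sum_le_card_nsmul _ _ _ fun i _ => volume_real_sideTrace_le (hF i))
  calc s = volume.real (Icc 0 s) := by rw [Real.volume_real_Icc_of_le hs, sub_zero]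
    _ ≤ volume.real (A ∪ B ∪ C) := measureReal_mono hcover hfin
    _ ≤ volume.real A + volume.real B + volume.real C :=
      (measureReal_union_le _ _).trans (by gcongr; exact measureReal_union_le _ _)
    _ ≤ _ := by linarith

lemma sum_card_cornerSquares_add_card_isolatedSquares_le
    (hF : ∀ i, ∀ x ∈ F i, ∀ y ∈ F i, dist x y ≤ √2) (hs : √2 < s) :
    ∑ k, (#(cornerSquares s F k) + #(isolatedSquares s F k)) ≤ Fintype.card ι := by
  classical
  calc ∑ k, (#(cornerSquares s F k) + #(isolatedSquares s F k))
      = ∑ i, (#{k | i ∈ cornerSquares s F k} + #{k | i ∈ isolatedSquares s F k}) := by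
        rw [Finset.sum_add_distrib, Finset.sum_add_distrib,
          sum_card_eq_sum_card_filter_mem (cornerSquares s F),
          sum_card_eq_sum_card_filter_mem (isolatedSquares s F)]
    _ ≤ ∑ _i : ι, 1 := by
        refine Finset.sum_le_sum fun i _ => ?_
        simp only [mem_cornerSquares, mem_isolatedSquares]
        exact card_adjacent_add_card_isolated_le_one _ fun k h h₂ =>
          hs.not_ge (le_sqrt_two_of_nonempty_sideTrace_add_two (hF i) h h₂)
    _ = Fintype.card ι := by simp

theorem four_mul_le_of_frontier_subset (hF : ∀ i, ∀ x ∈ F i, ∀ y ∈ F i, dist x y ≤ √2)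
    (hs : 2 < s) (hcov : frontier (sqSet s) ⊆ ⋃ i, F i) :
    4 * s ≤ 8 + (Fintype.card ι - 4) * √2 := by
  have h2 := sqrt_two_lt_two
  set a := fun k => volume.real (⋃ i ∈ cornerSquares s F k, sideTrace s (F i) k)
  set b := fun k => volume.real (⋃ i ∈ cornerSquares s F k, sideTrace s (F i) (k + 1))
  have hside (k : ZMod 4) : s ≤ a k + b (k - 1) + #(isolatedSquares s F k) * √2 := by
    simpa only [a, b, sub_add_cancel] using le_volume_real_side hF (by linarith) hcov k
  have hcount : (∑ k, (#(cornerSquares s F k) + #(isolatedSquares s F k)) : ℝ) ≤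
      Fintype.card ι := by
    exact_mod_cast sum_card_cornerSquares_add_card_isolatedSquares_le hF (by linarith)
  calc 4 * s = ∑ _k : ZMod 4, s := by simp
    _ ≤ ∑ k, (a k + b (k - 1) + #(isolatedSquares s F k) * √2) :=
      Finset.sum_le_sum fun k _ => hside k
    _ = ∑ k, (a k + b k) + ∑ k, (#(isolatedSquares s F k) : ℝ) * √2 := by
      rw [Finset.sum_add_distrib, Finset.sum_add_distrib, Finset.sum_add_distrib,
        ← (Equiv.subRight 1).sum_comp b]
      rfl
    _ ≤ ∑ k, (2 + (#(cornerSquares s F k) - 1) * √2) +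
        ∑ k, (#(isolatedSquares s F k) : ℝ) * √2 :=
      add_le_add (Finset.sum_le_sum fun k _ => volume_real_corner_le hF k) le_rfl
    _ = 8 + ((∑ k, (#(cornerSquares s F k) + #(isolatedSquares s F k)) : ℝ) - 4) * √2 := by
      simp only [Finset.sum_add_distrib, ← Finset.sum_mul, Finset.sum_sub_distrib,
        Finset.sum_const, Finset.card_univ, ZMod.card, nsmul_eq_mul]
      ring
    _ ≤ 8 + (Fintype.card ι - 4) * √2 := by gcongr

end Cover

def BoundaryCoverable (n : ℕ) (s : ℝ) : Prop :=
  ∃ F : Fin n → Set E2, (∀ i, IsUnitSquare (F i)) ∧ frontier (sqSet s) ⊆ ⋃ i, F i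

lemma boundaryCoverable_of_mod_four_eq_zero {n : ℕ} (hn : 4 ≤ n) (hmod : n % 4 = 0) :
    BoundaryCoverable n (2 + ((n : ℝ) - 4) / 4 * √2) := by
  obtain ⟨m, rfl⟩ : 4 ∣ n := Nat.dvd_of_mod_eq_zero hmod
  have hs : 2 + (((4 * m : ℕ) : ℝ) - 4) / 4 * √2 = 2 + (m - 1) * √2 := by push_cast; ring
  rw [hs]
  exact exists_fin_cover (by simp) (fun i => (isUnitSquare_sideSquare _).image _)
    (frontier_subset_iUnion_sideSquare (by omega))

lemma le_of_boundaryCoverable {n : ℕ} (hn : 4 ≤ n) {s : ℝ} (h : BoundaryCoverable n s) :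
    s ≤ 2 + ((n : ℝ) - 4) / 4 * √2 := by
  have hn' : (4 : ℝ) ≤ n := by exact_mod_cast hn
  rcases le_or_gt s 2 with hs | hs
  · nlinarith [Real.sqrt_nonneg 2]
  obtain ⟨F, hF, hcov⟩ := h
  have := four_mul_le_of_frontier_subset (fun i _ hx _ hy => (hF i).dist_le hx hy) hs hcov
  rw [Fintype.card_fin] at this
  linarith

lemma Sbd_eq {n : ℕ} (hn : 4 ≤ n) (hmod : n % 4 = 0) : Sbd n = 2 + ((n : ℝ) - 4) / 4 * √2 := by
  have hn' : (4 : ℝ) ≤ n := by exact_mod_cast hn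
  refine IsGreatest.csSup_eq ⟨⟨by positivity, boundaryCoverable_of_mod_four_eq_zero hn hmod⟩, ?_⟩
  exact fun s hs => le_of_boundaryCoverable hn hs.2

theorem Sbd_values (n : ℕ) (hn : 4 ≤ n) (hmod : n % 4 = 0) :
    (∃ F : Fin n → Set E2, (∀ i, IsUnitSquare (F i)) ∧
      frontier (sqSet (2 + ((n : ℝ) - 4) / 4 * Real.sqrt 2)) ⊆ ⋃ i, F i) ∧
    2 + ((n : ℝ) - 4) / 4 * Real.sqrt 2 ≤ Sbd n ∧
    Sbd 4 = 2 ∧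
    Sbd (n + 4) = Sbd n + Real.sqrt 2 := by
  refine ⟨boundaryCoverable_of_mod_four_eq_zero hn hmod, (Sbd_eq hn hmod).ge, ?_, ?_⟩
  · rw [Sbd_eq le_rfl rfl]
    norm_num
  · rw [Sbd_eq (by omega) (by omega), Sbd_eq hn hmod]
    push_cast
    ring

end
end
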